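/- Let A be a unital C*-algebra, a a nonzero positive element of A, and x, y ∈ A admitting a-adjoints x^{#a}, y^{#a}, with ‖x‖_a and ‖y‖_a finite. Then for every real n > 1, v_a(x + y)² ≤ v_a(x)² + v_a(y)² + v_a(y x) + (1/n)·‖x‖_a^n + ((n − 1)/n)·‖y‖_a^{n/(n−1)}. -/

import Mathlib

open scoped ComplexOrder

section

variable {A : Type*} [CStarAlgebra A] [PartialOrder A] [StarOrderedRing A]

/-- A positive linear functional on `A`: `f (x* x) ≥ 0` for all `x`. -/
def IsPosLF (f : A →ₗ[ℂ] ℂ) : Prop := ∀ x : A, 0 ≤ f (star x * x)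

/-- Membership in `S_a(A)`: positive linear functionals `f` with `f a = 1`. -/
def MemSa (a : A) (f : A →ₗ[ℂ] ℂ) : Prop := IsPosLF f ∧ f a = 1

/-- The set of values whose supremum is the `a`-seminorm `‖x‖ₐ`. -/
def aNormSet (a x : A) : Set ℝ :=
  {r : ℝ | ∃ f : A →ₗ[ℂ] ℂ, MemSa a f ∧ r = Real.sqrt (f (star x * a * x)).re}

/-- The `a`-seminorm `‖x‖ₐ = sup {√(f(x* a x)) : f ∈ S_a(A)}`. -/
noncomputable def aNorm (a x : A) : ℝ := sSup (aNormSet a x)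

/-- The `a`-numerical radius `vₐ(x) = sup {|f(a x)| : f ∈ S_a(A)}`. -/
noncomputable def aNR (a x : A) : ℝ :=
  sSup {r : ℝ | ∃ f : A →ₗ[ℂ] ℂ, MemSa a f ∧ r = ‖f (a * x)‖}

end

/-! For a state `f ∈ S_a(A)`, `⟨u, v⟩ = f (v* a u)` is a semi-inner product on `A` in which `1` is
a unit vector, `f (a x) = ⟨x, 1⟩`, and an `a`-adjoint of `y` is an adjoint of left multiplication
by `y`. Buzano's inequality for the unit vector `1` then gives
`2 |f (a x)| |f (a y)| ≤ ‖x‖ ‖y^{#a}‖ + |f (a y x)|`, and `‖y^{#a}‖ ≤ ‖y‖ₐ`. Expanding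
`|f (a (x + y))|²` and bounding `‖x‖ₐ ‖y‖ₐ` by Young's inequality with exponents `n` and
`n / (n - 1)` gives the claim. -/

open scoped InnerProductSpace

theorem two_mul_norm_inner_mul_inner_le {𝕜 E : Type*} [RCLike 𝕜] [SeminormedAddCommGroup E]
    [InnerProductSpace 𝕜 E] {e : E} (he : ‖e‖ = 1) (x y : E) :
    2 * (‖⟪x, e⟫_𝕜‖ * ‖⟪e, y⟫_𝕜‖) ≤ ‖x‖ * ‖y‖ + ‖⟪x, y⟫_𝕜‖ := by
  set c := ⟪e, y⟫_𝕜
  -- the reflection of `y` in the line through `e`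
  set r : E := (2 * c) • e - y
  have hr : ‖r‖ = ‖y‖ := by
    have hre : RCLike.re ⟪(2 * c) • e, y⟫_𝕜 = 2 * ‖c‖ ^ 2 := by
      rw [inner_smul_left, map_mul (starRingEnd 𝕜), map_ofNat, mul_assoc, RCLike.conj_mul]
      norm_cast
    have h := @norm_sub_sq 𝕜 _ _ _ _ ((2 * c) • e) y
    rw [norm_smul, he, hre, norm_mul, RCLike.norm_two] at h
    nlinarith [norm_nonneg r, norm_nonneg y]
  calc 2 * (‖⟪x, e⟫_𝕜‖ * ‖c‖) = ‖⟪x, r⟫_𝕜 + ⟪x, y⟫_𝕜‖ := by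
        simp [r, inner_sub_right, inner_smul_right, norm_mul]
        ring
    _ ≤ ‖x‖ * ‖y‖ + ‖⟪x, y⟫_𝕜‖ := by
        grw [norm_add_le, norm_inner_le_norm, hr]

lemma Real.mul_le_young_of_one_lt {a b n : ℝ} (ha : 0 ≤ a) (hb : 0 ≤ b) (hn : 1 < n) :
    a * b ≤ 1 / n * a ^ n + (n - 1) / n * b ^ (n / (n - 1)) := by
  have h := Real.young_inequality_of_nonneg ha hb (Real.HolderConjugate.conjExponent hn)
  rw [Real.conjExponent, div_div_eq_mul_div] at h
  convert h using 2 <;> ring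

section

variable {A : Type*} [CStarAlgebra A]

lemma aNorm_nonneg (a x : A) : 0 ≤ aNorm a x :=
  Real.sSup_nonneg (by rintro r ⟨f, -, rfl⟩; exact Real.sqrt_nonneg _)

lemma aNR_nonneg (a x : A) : 0 ≤ aNR a x :=
  Real.sSup_nonneg (by rintro r ⟨f, -, rfl⟩; exact norm_nonneg _)

lemma norm_apply_le_aNR {a x : A} {c : ℝ} (hc : ∀ f, MemSa a f → ‖f (a * x)‖ ≤ c)
    {f : A →ₗ[ℂ] ℂ} (hf : MemSa a f) : ‖f (a * x)‖ ≤ aNR a x :=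
  le_csSup ⟨c, by rintro _ ⟨g, hg, rfl⟩; exact hc g hg⟩ ⟨f, hf, rfl⟩

lemma aNR_sq_le {a x : A} {c : ℝ} (hc : 0 ≤ c) (h : ∀ f, MemSa a f → ‖f (a * x)‖ ^ 2 ≤ c) :
    aNR a x ^ 2 ≤ c := by
  refine (Real.le_sqrt (aNR_nonneg a x) hc).mp (Real.sSup_le ?_ (Real.sqrt_nonneg c))
  rintro _ ⟨f, hf, rfl⟩
  exact (Real.le_sqrt (norm_nonneg _) hc).mpr (h f hf)

end

section

variable {A : Type*} [CStarAlgebra A] [PartialOrder A] [StarOrderedRing A]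

namespace IsPosLF

variable {f : A →ₗ[ℂ] ℂ} {a : A}

lemma map_nonneg (hf : IsPosLF f) {x : A} (hx : 0 ≤ x) : 0 ≤ f x := by
  simpa [(CFC.sqrt_nonneg x).star_eq, CFC.sqrt_mul_sqrt_self x hx] using hf (CFC.sqrt x)

noncomputable def toPositiveLinearMap (hf : IsPosLF f) : A →ₚ[ℂ] ℂ :=
  .mk₀ f fun _ ↦ hf.map_nonneg

noncomputable def sqrtMul (hf : IsPosLF f) (a u : A) : hf.toPositiveLinearMap.PreGNS :=
  hf.toPositiveLinearMap.toPreGNS (CFC.sqrt a * u)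

lemma inner_sqrtMul (hf : IsPosLF f) (ha : 0 ≤ a) (u v : A) :
    ⟪hf.sqrtMul a u, hf.sqrtMul a v⟫_ℂ = f (star u * a * v) := by
  rw [PositiveLinearMap.preGNS_inner_def]
  simp only [sqrtMul, PositiveLinearMap.ofPreGNS_toPreGNS, star_mul, (CFC.sqrt_nonneg a).star_eq]
  rw [mul_assoc, ← mul_assoc (CFC.sqrt a), CFC.sqrt_mul_sqrt_self a ha, mul_assoc]
  rfl

lemma norm_sqrtMul (hf : IsPosLF f) (ha : 0 ≤ a) (u : A) :
    ‖hf.sqrtMul a u‖ = √(f (star u * a * u)).re := by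
  rw [PositiveLinearMap.preGNS_norm_def, ← PositiveLinearMap.preGNS_inner_def,
    hf.inner_sqrtMul ha]

lemma inner_sqrtMul_mul_of_adjoint (hf : IsPosLF f) (ha : 0 ≤ a) {y yadj : A}
    (hyadj : a * yadj = star y * a) (u v : A) :
    ⟪hf.sqrtMul a v, hf.sqrtMul a (y * u)⟫_ℂ = ⟪hf.sqrtMul a (yadj * v), hf.sqrtMul a u⟫_ℂ := by
  have h : star yadj * a = a * y := by
    simpa [ha.isSelfAdjoint.star_eq] using congrArg star hyadj
  simp only [hf.inner_sqrtMul ha, star_mul, mul_assoc, h]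

lemma re_apply_le_mul_aNorm_sq (hf : IsPosLF f) (ha : 0 ≤ a) {y : A}
    (hy : BddAbove (aNormSet a y)) (hfa : 0 < (f a).re) :
    (f (star y * a * y)).re ≤ (f a).re * aNorm a y ^ 2 := by
  set m := (f a).re
  have hfm : f a = m := Complex.eq_re_of_ofReal_le (by exact_mod_cast hf.map_nonneg ha)
  have hstate : MemSa a (((m⁻¹ : ℝ) : ℂ) • f) := by
    refine ⟨fun z ↦ mul_nonneg ?_ (hf z), ?_⟩
    · exact_mod_cast (inv_pos.mpr hfa).le
    · simp [hfm, hfa.ne']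
  have h := le_csSup hy ⟨_, hstate, rfl⟩
  rw [Real.sqrt_le_iff, LinearMap.smul_apply, smul_eq_mul, Complex.re_ofReal_mul,
    inv_mul_le_iff₀ hfa] at h
  exact h.2

lemma sq_norm_sqrtMul (hf : IsPosLF f) (ha : 0 ≤ a) (u : A) :
    ‖hf.sqrtMul a u‖ ^ 2 = (f (star u * a * u)).re := by
  rw [@norm_sq_eq_re_inner ℂ, hf.inner_sqrtMul ha]
  rfl

lemma norm_sqrtMul_mul_le (hf : IsPosLF f) (ha : 0 ≤ a) {y : A}
    (hy : BddAbove (aNormSet a y)) {w : A} (hw : 0 < ‖hf.sqrtMul a w‖) :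
    ‖hf.sqrtMul a (y * w)‖ ≤ aNorm a y * ‖hf.sqrtMul a w‖ := by
  set g := f ∘ₗ LinearMap.mulLeft ℂ (star w) ∘ₗ LinearMap.mulRight ℂ w
  have hg : IsPosLF g := fun z ↦ by simpa [g, mul_assoc] using hf (z * w)
  have hga : (g a).re = ‖hf.sqrtMul a w‖ ^ 2 := by
    simp [g, hf.sq_norm_sqrtMul ha, mul_assoc]
  have hgy : (g (star y * a * y)).re = ‖hf.sqrtMul a (y * w)‖ ^ 2 := by
    simp [g, hf.sq_norm_sqrtMul ha, mul_assoc]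
  have h := hg.re_apply_le_mul_aNorm_sq ha hy (hga ▸ pow_pos hw 2)
  rw [hga, hgy] at h
  rw [← pow_le_pow_iff_left₀ (norm_nonneg _) (by positivity [aNorm_nonneg a y]) two_ne_zero]
  linarith

end IsPosLF

namespace MemSa

variable {f : A →ₗ[ℂ] ℂ} {a : A}

lemma norm_sqrtMul_one (hf : MemSa a f) (ha : 0 ≤ a) : ‖hf.1.sqrtMul a 1‖ = 1 := by
  simp [hf.1.norm_sqrtMul ha, hf.2]

lemma inner_sqrtMul_one (hf : MemSa a f) (ha : 0 ≤ a) (u : A) :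
    ⟪hf.1.sqrtMul a 1, hf.1.sqrtMul a u⟫_ℂ = f (a * u) := by
  simp [hf.1.inner_sqrtMul ha]

lemma norm_sqrtMul_le_aNorm (hf : MemSa a f) (ha : 0 ≤ a) {x : A}
    (hx : BddAbove (aNormSet a x)) : ‖hf.1.sqrtMul a x‖ ≤ aNorm a x := by
  rw [hf.1.norm_sqrtMul ha]
  exact le_csSup hx ⟨f, hf, rfl⟩

lemma norm_sqrtMul_adjoint_le (hf : MemSa a f) (ha : 0 ≤ a) {y yadj : A}
    (hy : BddAbove (aNormSet a y)) (hyadj : a * yadj = star y * a) :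
    ‖hf.1.sqrtMul a yadj‖ ≤ aNorm a y := by
  set Y := hf.1.sqrtMul a yadj
  rcases (norm_nonneg Y).eq_or_lt with hY0 | hY
  · exact hY0 ▸ aNorm_nonneg a y
  have h : ‖Y‖ ^ 2 ≤ aNorm a y * ‖Y‖ :=
    calc ‖Y‖ ^ 2 = RCLike.re ⟪hf.1.sqrtMul a 1, hf.1.sqrtMul a (y * yadj)⟫_ℂ := by
          rw [hf.1.inner_sqrtMul_mul_of_adjoint ha hyadj, mul_one, @norm_sq_eq_re_inner ℂ]
      _ ≤ ‖hf.1.sqrtMul a (y * yadj)‖ := by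
          grw [RCLike.re_le_norm, norm_inner_le_norm, hf.norm_sqrtMul_one ha, one_mul]
      _ ≤ aNorm a y * ‖Y‖ := hf.1.norm_sqrtMul_mul_le ha hy hY
  nlinarith

lemma inner_sqrtMul_adjoint (hf : MemSa a f) (ha : 0 ≤ a) {y yadj : A}
    (hyadj : a * yadj = star y * a) (u : A) :
    ⟪hf.1.sqrtMul a yadj, hf.1.sqrtMul a u⟫_ℂ = f (a * (y * u)) := by
  simpa [hf.inner_sqrtMul_one ha] using (hf.1.inner_sqrtMul_mul_of_adjoint ha hyadj u 1).symm

lemma norm_apply_mul_le_aNorm (hf : MemSa a f) (ha : 0 ≤ a) {x : A}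
    (hx : BddAbove (aNormSet a x)) : ‖f (a * x)‖ ≤ aNorm a x := by
  rw [← hf.inner_sqrtMul_one ha]
  grw [norm_inner_le_norm, hf.norm_sqrtMul_one ha, one_mul, hf.norm_sqrtMul_le_aNorm ha hx]

lemma norm_apply_mul_mul_le (hf : MemSa a f) (ha : 0 ≤ a) {x y yadj : A}
    (hyadj : a * yadj = star y * a) (hx : BddAbove (aNormSet a x))
    (hy : BddAbove (aNormSet a y)) : ‖f (a * (y * x))‖ ≤ aNorm a y * aNorm a x := by
  rw [← hf.inner_sqrtMul_adjoint ha hyadj]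
  grw [norm_inner_le_norm, hf.norm_sqrtMul_adjoint_le ha hy hyadj,
    hf.norm_sqrtMul_le_aNorm ha hx]
  exact aNorm_nonneg a y

lemma two_mul_norm_mul_norm_le (hf : MemSa a f) (ha : 0 ≤ a) {x y yadj : A}
    (hyadj : a * yadj = star y * a) (hx : BddAbove (aNormSet a x))
    (hy : BddAbove (aNormSet a y)) :
    2 * (‖f (a * x)‖ * ‖f (a * y)‖) ≤ aNorm a x * aNorm a y + ‖f (a * (y * x))‖ := by
  set e := hf.1.sqrtMul a 1
  set X := hf.1.sqrtMul a x
  set Y := hf.1.sqrtMul a yadj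
  have hfx : ‖f (a * x)‖ = ‖⟪X, e⟫_ℂ‖ := by rw [← hf.inner_sqrtMul_one ha, norm_inner_symm]
  have hfy : ‖f (a * y)‖ = ‖⟪e, Y⟫_ℂ‖ := by
    rw [← mul_one y, ← hf.inner_sqrtMul_adjoint ha hyadj, norm_inner_symm]
  have hfyx : ‖f (a * (y * x))‖ = ‖⟪X, Y⟫_ℂ‖ := by
    rw [← hf.inner_sqrtMul_adjoint ha hyadj, norm_inner_symm]
  rw [hfx, hfy, hfyx]
  grw [two_mul_norm_inner_mul_inner_le (hf.norm_sqrtMul_one ha), hf.norm_sqrtMul_le_aNorm ha hx,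
    hf.norm_sqrtMul_adjoint_le ha hy hyadj]
  exact aNorm_nonneg a x

lemma norm_apply_mul_add_sq_le (hf : MemSa a f) (ha : 0 ≤ a) {x y yadj : A}
    (hyadj : a * yadj = star y * a) (hx : BddAbove (aNormSet a x))
    (hy : BddAbove (aNormSet a y)) :
    ‖f (a * (x + y))‖ ^ 2 ≤
      aNR a x ^ 2 + aNR a y ^ 2 + aNR a (y * x) + aNorm a x * aNorm a y := by
  have hfx := norm_apply_le_aNR (fun g hg ↦ hg.norm_apply_mul_le_aNorm ha hx) hf
  have hfy := norm_apply_le_aNR (fun g hg ↦ hg.norm_apply_mul_le_aNorm ha hy) hf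
  have hfyx := norm_apply_le_aNR (fun g hg ↦ hg.norm_apply_mul_mul_le ha hyadj hx hy) hf
  calc ‖f (a * (x + y))‖ ^ 2 ≤ (‖f (a * x)‖ + ‖f (a * y)‖) ^ 2 := by
        rw [mul_add, map_add]
        gcongr
        exact norm_add_le _ _
    _ = ‖f (a * x)‖ ^ 2 + ‖f (a * y)‖ ^ 2 + 2 * (‖f (a * x)‖ * ‖f (a * y)‖) := by ring
    _ ≤ _ := by
        grw [hf.two_mul_norm_mul_norm_le ha hyadj hx hy, hfx, hfy, hfyx]
        linarith

end MemSa

theorem stmt13_general (a : A) (ha : 0 ≤ a)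
    (x y yadj : A)
    (hyadj : a * yadj = star y * a)
    (hx : BddAbove (aNormSet a x)) (hy : BddAbove (aNormSet a y))
    (n : ℝ) (hn : 1 < n) :
    aNR a (x + y) ^ 2 ≤
      aNR a x ^ 2 + aNR a y ^ 2 + aNR a (y * x) +
        (1 / n) * aNorm a x ^ n + ((n - 1) / n) * aNorm a y ^ (n / (n - 1)) := by
  have hxy := mul_nonneg (aNorm_nonneg a x) (aNorm_nonneg a y)
  calc aNR a (x + y) ^ 2
      ≤ aNR a x ^ 2 + aNR a y ^ 2 + aNR a (y * x) + aNorm a x * aNorm a y :=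
        aNR_sq_le (by linarith [aNR_nonneg a (y * x), sq_nonneg (aNR a x), sq_nonneg (aNR a y)])
          fun f hf ↦ hf.norm_apply_mul_add_sq_le ha hyadj hx hy
    _ ≤ _ := by
        grw [Real.mul_le_young_of_one_lt (aNorm_nonneg a x) (aNorm_nonneg a y) hn]
        linarith

/-- for real `n > 1`,
`vₐ(x+y)² ≤ vₐ(x)² + vₐ(y)² + vₐ(yx) + (1/n)‖x‖ₐⁿ + ((n-1)/n)‖y‖ₐ^{n/(n-1)}`. -/
theorem stmt13 (a : A) (ha : 0 ≤ a) (ha0 : a ≠ 0)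
    (x xadj y yadj : A)
    (hxadj : a * xadj = star x * a) (hyadj : a * yadj = star y * a)
    (hx : BddAbove (aNormSet a x)) (hy : BddAbove (aNormSet a y))
    (n : ℝ) (hn : 1 < n) :
    aNR a (x + y) ^ 2 ≤
      aNR a x ^ 2 + aNR a y ^ 2 + aNR a (y * x) +
        (1 / n) * aNorm a x ^ n + ((n - 1) / n) * aNorm a y ^ (n / (n - 1)) :=
  stmt13_general a ha x y yadj hyadj hx hy n hn

end
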